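/- Let α and β be partitions such that α is obtained from β by removing a node of residue j. If i ≠ j, then every normal node of β of residue i is also a normal node of α, and every conormal node of α of residue i is also a conormal node of β. -/

import Mathlib

open scoped Classical

noncomputable section

namespace IrrTensor

/-! ### Partitions as finitely supported functions `ℕ →₀ ℕ` (0-indexed rows) -/

abbrev Ptn := ℕ →₀ ℕ

/-- `f` is weakly decreasing, i.e. a genuine partition shape. -/
def IsPtn (f : Ptn) : Prop := ∀ ⦃i j : ℕ⦄, i ≤ j → f j ≤ f i

/-- `f` is a partition of `n`. -/
def IsPtnOf (f : Ptn) (n : ℕ) : Prop := IsPtn f ∧ f.sum (fun _ m => m) = n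

/-- `p`-regular: no (positive) part is repeated `p` or more times. -/
def PReg (p : ℕ) (f : Ptn) : Prop :=
  ∀ v : ℕ, 0 < v → (f.support.filter (fun i => f i = v)).card < p

/-- the number of (nonzero) parts of `f`. -/
def height (f : Ptn) : ℕ := f.support.card

/-- row `r` carries a removable node, namely `(r, f r - 1)` (0-indexed). -/
def RemovableAt (f : Ptn) (r : ℕ) : Prop := f (r + 1) < f r

/-- row `r` carries an addable node, namely `(r, f r)` (0-indexed). -/
def AddableAt (f : Ptn) (r : ℕ) : Prop := r = 0 ∨ f r < f (r - 1)

/-- residue of the removable node in row `r` (the residue of a node `(r, c)`,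
both coordinates 0-indexed, is `c - r` mod `p`). -/
def resRem (p : ℕ) (f : Ptn) (r : ℕ) : ZMod p := ((f r - 1 : ℕ) : ZMod p) - (r : ZMod p)

/-- residue of the addable node in row `r`. -/
def resAdd (p : ℕ) (f : Ptn) (r : ℕ) : ZMod p := ((f r : ℕ) : ZMod p) - (r : ZMod p)

/-- The removable node in row `r` is *normal*: every addable node of the same residue
strictly above it can be matched injectively with a distinct removable node of the same
residue strictly between them (the usual lattice/parenthesis condition). -/
def NormalAt (p : ℕ) (f : Ptn) (r : ℕ) : Prop :=
  RemovableAt f r ∧ ∃ m : ℕ → ℕ,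
    Set.InjOn m {s | s < r ∧ AddableAt f s ∧ resAdd p f s = resRem p f r} ∧
    ∀ s, s < r → AddableAt f s → resAdd p f s = resRem p f r →
      s < m s ∧ m s < r ∧ RemovableAt f (m s) ∧ resRem p f (m s) = resRem p f r

/-- The addable node in row `r` is *conormal* (the dual condition). -/
def ConormalAt (p : ℕ) (f : Ptn) (r : ℕ) : Prop :=
  AddableAt f r ∧ ∃ m : ℕ → ℕ,
    Set.InjOn m {s | r < s ∧ RemovableAt f s ∧ resRem p f s = resAdd p f r} ∧
    ∀ s, r < s → RemovableAt f s → resRem p f s = resAdd p f r →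
      r < m s ∧ m s < s ∧ AddableAt f (m s) ∧ resAdd p f (m s) = resAdd p f r

/-- rows carrying a normal node of residue `i`. -/
def normalRows (p : ℕ) (i : ZMod p) (f : Ptn) : Finset ℕ :=
  f.support.filter (fun r => NormalAt p f r ∧ resRem p f r = i)

/-- `ε_i(f)`: the number of normal nodes of residue `i`. -/
def eps (p : ℕ) (i : ZMod p) (f : Ptn) : ℕ := (normalRows p i f).card

/-- total number of normal nodes. -/
def normalCount (p : ℕ) (f : Ptn) : ℕ :=
  (f.support.filter (fun r => NormalAt p f r)).card

/-- JS-partition: exactly one normal node. -/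
def IsJS (p : ℕ) (f : Ptn) : Prop := normalCount p f = 1

/-- remove a node from row `r`. -/
def removeAt (f : Ptn) (r : ℕ) : Ptn := f.update r (f r - 1)

/-- `ẽ_i f`: remove the bottom normal node of residue `i` (junk value `f` if none). -/
def etilde (p : ℕ) (i : ZMod p) (f : Ptn) : Ptn :=
  if h : (normalRows p i f).Nonempty then removeAt f ((normalRows p i f).max' h) else f

def removableRows (f : Ptn) : Finset ℕ := f.support.filter (fun r => RemovableAt f r)

/-- remove the top removable node. -/
def removeTopNode (f : Ptn) : Ptn :=
  if h : (removableRows f).Nonempty then removeAt f ((removableRows f).min' h) else f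

/-- add the bottom addable node (a new row of length 1 at the bottom). -/
def addBottomNode (f : Ptn) : Ptn := f.update f.support.card (f f.support.card + 1)

/-- strict lexicographic order on partitions: `f <lex g`. -/
def lexLT (f g : Ptn) : Prop := ∃ k : ℕ, (∀ i < k, f i = g i) ∧ f k < g k

def lexLE (f g : Ptn) : Prop := f = g ∨ lexLT f g

/-- the number of nodes of `f` of residue `i` (the residue content). -/
def cnt (p : ℕ) (f : Ptn) (i : ZMod p) : ℕ :=
  ∑ r ∈ f.support, ((Finset.range (f r)).filter (fun c => ((c : ZMod p) - (r : ZMod p)) = i)).card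

/-- the two-row partition `(a, b)`. -/
def twoRow (a b : ℕ) : Ptn := Finsupp.single 0 a + Finsupp.single 1 b

/-- the three-row partition `(a, b, c)`. -/
def threeRow (a b c : ℕ) : Ptn :=
  Finsupp.single 0 a + Finsupp.single 1 b + Finsupp.single 2 c

/-! ### Representation-theoretic generalities -/

variable {F : Type} [Field F] {G : Type} [Group G]
variable {V W : Type} [AddCommGroup V] [Module F V] [AddCommGroup W] [Module F W]

/-- `U` is a subrepresentation of `ρ`. -/
def IsSubrep (ρ : Representation F G V) (U : Submodule F V) : Prop :=
  ∀ (g : G), ∀ v ∈ U, ρ g v ∈ U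

/-- the representation induced on a subrepresentation. -/
def subRepn (ρ : Representation F G V) (U : Submodule F V) (h : IsSubrep ρ U) :
    Representation F G ↥U where
  toFun g := (ρ g).restrict (fun v hv => h g v hv)
  map_one' := by
    ext v
    simp [LinearMap.restrict_apply]
  map_mul' g₁ g₂ := by
    ext v
    simp [LinearMap.restrict_apply]

/-- `f` is a homomorphism of representations from `ρ` to `σ`. -/
def IsRepHom (ρ : Representation F G V) (σ : Representation F G W) (f : V →ₗ[F] W) : Prop :=
  ∀ (g : G) (v : V), f (ρ g v) = σ g (f v)

/-- `ρ ≅ σ` as representations. -/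
def RepIso (ρ : Representation F G V) (σ : Representation F G W) : Prop :=
  ∃ e : V ≃ₗ[F] W, IsRepHom ρ σ e.toLinearMap

/-- irreducibility of a representation. -/
def Irr (ρ : Representation F G V) : Prop :=
  (⊥ : Submodule F V) ≠ ⊤ ∧ ∀ U : Submodule F V, IsSubrep ρ U → U = ⊥ ∨ U = ⊤

/-- the `F`-space of homomorphisms of representations `ρ → σ`. -/
def repHom (ρ : Representation F G V) (σ : Representation F G W) :
    Submodule F (V →ₗ[F] W) where
  carrier := {f | IsRepHom ρ σ f}
  add_mem' := by
    intro f g hf hg gg v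
    simp only [LinearMap.add_apply, hf gg v, hg gg v, map_add]
  zero_mem' := by intro g v; simp
  smul_mem' := by
    intro c f hf g v
    simp only [LinearMap.smul_apply, hf g v, map_smul]

/-- `dim Hom_G(ρ, σ)`. -/
def homDim (ρ : Representation F G V) (σ : Representation F G W) : ℕ :=
  Module.finrank F (repHom ρ σ)

/-- `dim End_G(ρ)`. -/
def endDim (ρ : Representation F G V) : ℕ := homDim ρ ρ

/-- restriction of a representation to a subgroup. -/
def resRep (ρ : Representation F G V) (H : Subgroup G) : Representation F H V :=
  ρ.comp H.subtype

/-- a bundled representation of `G` over `F`. -/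
structure RepOb (F : Type) [Field F] (G : Type) [Group G] where
  carrier : Type
  [acg : AddCommGroup carrier]
  [mod : Module F carrier]
  rep : Representation F G carrier

attribute [instance] RepOb.acg RepOb.mod

def RepOb.of (ρ : Representation F G V) : RepOb F G :=
  { carrier := V, rep := ρ }

/-- direct sum of two representations. -/
def prodRep (ρ : Representation F G V) (σ : Representation F G W) :
    Representation F G (V × W) where
  toFun g := (ρ g).prodMap (σ g)
  map_one' := by
    ext v <;> simp
  map_mul' g h := by
    ext v <;> simp

/-- direct sum of a family of representations. -/
def piRep {ι : Type} (M : ι → RepOb F G) : Representation F G (∀ i, (M i).carrier) where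
  toFun g := LinearMap.pi fun i => ((M i).rep g).comp (LinearMap.proj i)
  map_one' := by
    ext v i
    simp
  map_mul' g h := by
    ext v i
    simp

/-- `σ` is (isomorphic to) a composition factor of `ρ`, i.e. a quotient of a
subrepresentation. -/
def IsCompFactor (ρ : Representation F G V) (σ : Representation F G W) : Prop :=
  ∃ (U : Submodule F V) (hU : IsSubrep ρ U) (ψ : ↥U →ₗ[F] W),
    Function.Surjective ψ ∧ IsRepHom (subRepn ρ U hU) σ ψ

/-- `σ` embeds into `ρ` (is isomorphic to a subrepresentation). -/
def Embeds (σ : Representation F G W) (ρ : Representation F G V) : Prop :=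
  ∃ f : W →ₗ[F] V, Function.Injective f ∧ IsRepHom σ ρ f

/-- `σ` is a quotient of `ρ`. -/
def IsQuotientRep (ρ : Representation F G V) (σ : Representation F G W) : Prop :=
  ∃ f : V →ₗ[F] W, Function.Surjective f ∧ IsRepHom ρ σ f

/-- `σ` is a direct summand of `ρ`. -/
def IsSummandRep (ρ : Representation F G V) (σ : Representation F G W) : Prop :=
  ∃ C : RepOb F G, RepIso ρ (prodRep σ C.rep)

/-- `U` is a simple subrepresentation. -/
def IsSimpleSubrep (ρ : Representation F G V) (U : Submodule F V) : Prop :=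
  IsSubrep ρ U ∧ U ≠ ⊥ ∧ ∀ U' ≤ U, IsSubrep ρ U' → U' = ⊥ ∨ U' = U

/-- the socle: the sum of all simple subrepresentations. -/
def socle (ρ : Representation F G V) : Submodule F V := sSup {U | IsSimpleSubrep ρ U}

/-- `ρ` has simple socle. -/
def HasSimpleSocle (ρ : Representation F G V) : Prop := IsSimpleSubrep ρ (socle ρ)

/-! ### Symmetric and alternating groups, Young subgroups, permutation and Specht modules -/

/-- the sign representation of the symmetric group. -/
def sgnRep (F : Type) [Field F] (n : ℕ) : Representation F (Equiv.Perm (Fin n)) F where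
  toFun g := ((Equiv.Perm.sign g : ℤ) : F) • LinearMap.id
  map_one' := by
    simp [Module.End.one_eq_id]
  map_mul' g h := by
    ext
    simp [mul_comm, mul_assoc, mul_smul]

/-- restriction of a representation of `Σ_n` to the alternating group `A_n`. -/
def resAlt {n : ℕ} (ρ : Representation F (Equiv.Perm (Fin n)) V) :
    Representation F (alternatingGroup (Fin n)) V :=
  ρ.comp (alternatingGroup (Fin n)).subtype

/-- transport of permutations along an equivalence, as a monoid homomorphism. -/
def permCongrHom {α β : Type} (e : α ≃ β) : Equiv.Perm α →* Equiv.Perm β where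
  toFun g := (e.symm.trans g).trans e
  map_one' := by ext x; simp
  map_mul' g h := by ext x; simp

/-- the standard embedding `Σ_a × Σ_b → Σ_n` (for `a + b = n`), with `Σ_a` acting on the
first `a` points and `Σ_b` on the last `b` points; its image is the Young subgroup
`Σ_{(a,b)}`. -/
def youngPairHom (a b n : ℕ) (h : a + b = n) :
    Equiv.Perm (Fin a) × Equiv.Perm (Fin b) →* Equiv.Perm (Fin n) :=
  (permCongrHom (finSumFinEquiv.trans (finCongr h))).comp (Equiv.Perm.sumCongrHom (Fin a) (Fin b))

/-- the standard embedding `Σ_m → Σ_n` for `m ≤ n`. -/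
def stdEmbed (m n : ℕ) (h : m + (n - m) = n) : Equiv.Perm (Fin m) →* Equiv.Perm (Fin n) :=
  (youngPairHom m (n - m) n h).comp (MonoidHom.inl _ _)

/-- the outer tensor product of a representation of `A` and one of `B`, as a
representation of `A × B`. -/
def outerTensor {A B : Type} [Group A] [Group B]
    (ρ : Representation F A V) (σ : Representation F B W) :
    Representation F (A × B) (TensorProduct F V W) :=
  Representation.tprod
    (ρ.comp (MonoidHom.fst A B) : Representation F (A × B) V)
    (σ.comp (MonoidHom.snd A B) : Representation F (A × B) W)

/-- the index of the interval block of the composition `α` containing `x`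
(blocks `{0, …, α₀ - 1}`, `{α₀, …, α₀ + α₁ - 1}`, …). -/
def blockOf (α : Ptn) (x : ℕ) : ℕ := sInf {i | x < ∑ j ∈ Finset.range (i + 1), α j}

/-- the position of `x` inside its block: the column of `x` in the tableau obtained by
filling the Young diagram of `α` row by row with `0, 1, 2, …`. -/
def colOf (α : Ptn) (x : ℕ) : ℕ := x - ∑ j ∈ Finset.range (blockOf α x), α j

/-- the Young subgroup `Σ_α ≤ Σ_n`: permutations preserving each interval block. -/
def youngSubgroup (α : Ptn) (n : ℕ) : Subgroup (Equiv.Perm (Fin n)) where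
  carrier := {g | ∀ x : Fin n, blockOf α ((g x : Fin n) : ℕ) = blockOf α (x : ℕ)}
  one_mem' := by intro x; simp
  mul_mem' := by
    intro g h hg hh x
    simpa [Equiv.Perm.mul_apply] using (hg (h x)).trans (hh x)
  inv_mem' := by
    intro g hg x
    simpa using (hg (g⁻¹ x)).symm

/-- the permutation module `M^α = 1 ↑_{Σ_α}^{Σ_n}`, realized on the cosets
`Σ_n / Σ_α` (whose elements are the `α`-tabloids). -/
def permRep (F : Type) [Field F] (α : Ptn) (n : ℕ) :
    Representation F (Equiv.Perm (Fin n))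
      ((Equiv.Perm (Fin n) ⧸ youngSubgroup α n) →₀ F) :=
  { toFun := fun g => Finsupp.lmapDomain F F (g • ·)
    map_one' := by ext; simp
    map_mul' := fun x y => by ext; simp [mul_smul] }

/-- the polytabloid attached to the identity tableau: the signed column sum
`e_{t₀} = ∑_{τ ∈ C_{t₀}} sgn(τ) {τ t₀}`. -/
def spechtGen (F : Type) [Field F] (α : Ptn) (n : ℕ) :
    (Equiv.Perm (Fin n) ⧸ youngSubgroup α n) →₀ F :=
  ∑ τ ∈ Finset.univ.filter
      (fun τ : Equiv.Perm (Fin n) => ∀ x : Fin n, colOf α ((τ x : Fin n) : ℕ) = colOf α (x : ℕ)),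
    ((Equiv.Perm.sign τ : ℤ) : F) • Finsupp.single (QuotientGroup.mk τ) 1

/-- the Specht module `S^α ⊆ M^α`: the span of all polytabloids. -/
def spechtSubmodule (F : Type) [Field F] (α : Ptn) (n : ℕ) :
    Submodule F ((Equiv.Perm (Fin n) ⧸ youngSubgroup α n) →₀ F) :=
  Submodule.span F (Set.range fun g : Equiv.Perm (Fin n) => permRep F α n g (spechtGen F α n))

/-! ### Axiomatic interface for the modular irreducible representations `D^λ`

The family `D^λ` (for `λ` `p`-regular of `n`) is characterized (uniquely, up to
isomorphism) by: each `D^λ` is irreducible, they are pairwise non-isomorphic and exhaust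
all irreducibles, `D^λ` occurs as a composition factor of the permutation module `M^λ`,
and every composition factor `D^μ` of `M^λ` satisfies `μ ≥ λ` lexicographically.
The Mullineux map is characterized by `D^{λ^M} ≅ D^λ ⊗ sgn`. -/
structure SMTheory (F : Type) [Field F] (p n : ℕ) where
  D : Ptn → RepOb F (Equiv.Perm (Fin n))
  mull : Ptn → Ptn
  D_irr : ∀ lam, IsPtnOf lam n → PReg p lam → Irr (D lam).rep
  D_inj : ∀ lam mu, IsPtnOf lam n → PReg p lam → IsPtnOf mu n → PReg p mu →
    RepIso (D lam).rep (D mu).rep → lam = mu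
  D_exh : ∀ (W : Type) [AddCommGroup W] [Module F W]
    (σ : Representation F (Equiv.Perm (Fin n)) W), Irr σ →
      ∃ lam, IsPtnOf lam n ∧ PReg p lam ∧ RepIso σ (D lam).rep
  D_perm : ∀ lam, IsPtnOf lam n → PReg p lam → IsCompFactor (permRep F lam n) (D lam).rep
  D_tri : ∀ lam mu, IsPtnOf lam n → PReg p lam → IsPtnOf mu n → PReg p mu →
    IsCompFactor (permRep F lam n) (D mu).rep → lexLE lam mu
  mull_reg : ∀ lam, IsPtnOf lam n → PReg p lam →
    IsPtnOf (mull lam) n ∧ PReg p (mull lam)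
  mull_spec : ∀ lam, IsPtnOf lam n → PReg p lam →
    RepIso (D (mull lam)).rep ((D lam).rep.tprod (sgnRep F n))

section Residues

variable {p : ℕ} {f g : Ptn} {i : ZMod p}

/-- Normality only involves the addable and removable nodes of residue `i`, so it survives
passing to a partition with fewer such addable nodes and more such removable nodes. -/
theorem NormalAt.of_resNodes_subset
    (hadd : ∀ t, AddableAt g t → resAdd p g t = i → AddableAt f t ∧ resAdd p f t = i)
    (hrem : ∀ t, RemovableAt f t → resRem p f t = i → RemovableAt g t ∧ resRem p g t = i)
    {s : ℕ} (hs : NormalAt p f s) (hsi : resRem p f s = i) :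
    NormalAt p g s ∧ resRem p g s = i := by
  obtain ⟨hsg, hsgi⟩ := hrem s hs.1 hsi
  obtain ⟨m, hinj, hm⟩ := hs.2
  refine ⟨⟨hsg, m, hinj.mono ?_, fun t hts ht hti => ?_⟩, hsgi⟩
  · rintro t ⟨hts, ht, hti⟩
    obtain ⟨htf, htfi⟩ := hadd t ht (hti.trans hsgi)
    exact ⟨hts, htf, htfi.trans hsi.symm⟩
  · obtain ⟨htf, htfi⟩ := hadd t ht (hti.trans hsgi)
    obtain ⟨hlt, hlt', hmt, hmti⟩ := hm t hts htf (htfi.trans hsi.symm)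
    obtain ⟨hmtg, hmtgi⟩ := hrem (m t) hmt (hmti.trans hsi)
    exact ⟨hlt, hlt', hmtg, hmtgi.trans hsgi.symm⟩

theorem ConormalAt.of_resNodes_subset
    (hadd : ∀ t, AddableAt g t → resAdd p g t = i → AddableAt f t ∧ resAdd p f t = i)
    (hrem : ∀ t, RemovableAt f t → resRem p f t = i → RemovableAt g t ∧ resRem p g t = i)
    {s : ℕ} (hs : ConormalAt p g s) (hsi : resAdd p g s = i) :
    ConormalAt p f s ∧ resAdd p f s = i := by
  obtain ⟨hsf, hsfi⟩ := hadd s hs.1 hsi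
  obtain ⟨m, hinj, hm⟩ := hs.2
  refine ⟨⟨hsf, m, hinj.mono ?_, fun t hts ht hti => ?_⟩, hsfi⟩
  · rintro t ⟨hts, ht, hti⟩
    obtain ⟨htg, htgi⟩ := hrem t ht (hti.trans hsfi)
    exact ⟨hts, htg, htgi.trans hsi.symm⟩
  · obtain ⟨htg, htgi⟩ := hrem t ht (hti.trans hsfi)
    obtain ⟨hlt, hlt', hmt, hmti⟩ := hm t hts htg (htgi.trans hsi.symm)
    obtain ⟨hmtf, hmtfi⟩ := hadd (m t) hmt (hmti.trans hsi)
    exact ⟨hlt, hlt', hmtf, hmtfi.trans hsfi.symm⟩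

end Residues

section RemoveAt

variable {p : ℕ} {f : Ptn} {r t : ℕ}

theorem removeAt_apply_self : removeAt f r r = f r - 1 := by
  simp [removeAt]

theorem removeAt_apply_of_ne (h : t ≠ r) : removeAt f r t = f t := by
  simp [removeAt, Function.update_of_ne h]

theorem removeAt_le (f : Ptn) (r t : ℕ) : removeAt f r t ≤ f t := by
  rcases eq_or_ne t r with rfl | h
  · exact removeAt_apply_self.trans_le (Nat.sub_le _ _)
  · exact (removeAt_apply_of_ne h).le

theorem resAdd_removeAt_self : resAdd p (removeAt f r) r = resRem p f r := by
  simp only [resAdd, resRem, removeAt_apply_self]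

theorem addableAt_of_addableAt_removeAt (ht : AddableAt (removeAt f r) t)
    (hres : resAdd p (removeAt f r) t ≠ resRem p f r) :
    AddableAt f t ∧ resAdd p f t = resAdd p (removeAt f r) t := by
  have htr : t ≠ r := by
    rintro rfl
    exact hres resAdd_removeAt_self
  have hval : removeAt f r t = f t := removeAt_apply_of_ne htr
  refine ⟨ht.imp_right fun hlt => ?_, by simp only [resAdd, hval]⟩
  rw [← hval]
  exact hlt.trans_le (removeAt_le f r (t - 1))

theorem removableAt_removeAt_of_removableAt (ht : RemovableAt f t)
    (hres : resRem p f t ≠ resRem p f r) :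
    RemovableAt (removeAt f r) t ∧ resRem p (removeAt f r) t = resRem p f t := by
  have hval : removeAt f r t = f t := removeAt_apply_of_ne (ne_of_apply_ne _ hres)
  refine ⟨?_, by simp only [resRem, hval]⟩
  show removeAt f r (t + 1) < removeAt f r t
  rw [hval]
  exact (removeAt_le f r (t + 1)).trans_lt ht

end RemoveAt

theorem statement_11_general (p : ℕ) (β α : Ptn)
    (j i : ZMod p) (hij : i ≠ j) (r : ℕ)
    (hres : resRem p β r = j) (hα : α = removeAt β r) :
    (∀ s : ℕ, NormalAt p β s → resRem p β s = i → NormalAt p α s ∧ resRem p α s = i) ∧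
    (∀ s : ℕ, ConormalAt p α s → resAdd p α s = i → ConormalAt p β s ∧ resAdd p β s = i) := by
  subst hα hres
  have hadd : ∀ t, AddableAt (removeAt β r) t → resAdd p (removeAt β r) t = i →
      AddableAt β t ∧ resAdd p β t = i := fun t ht hti => by
    rw [← hti]
    exact addableAt_of_addableAt_removeAt ht (hti ▸ hij)
  have hrem : ∀ t, RemovableAt β t → resRem p β t = i →
      RemovableAt (removeAt β r) t ∧ resRem p (removeAt β r) t = i := fun t ht hti => by
    rw [← hti]
    exact removableAt_removeAt_of_removableAt ht (hti ▸ hij)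
  exact ⟨fun s => NormalAt.of_resNodes_subset hadd hrem,
    fun s => ConormalAt.of_resNodes_subset hadd hrem⟩

/-- If `α` is obtained from `β` by removing a node of residue `j`,
and `i ≠ j`, then every normal node of `β` of residue `i` is also normal in `α`,
and every conormal node of `α` of residue `i` is also conormal in `β`. -/
theorem statement_11 (p : ℕ) (hp : p.Prime) (β α : Ptn) (hβ : IsPtn β)
    (j i : ZMod p) (hij : i ≠ j) (r : ℕ)
    (hr : RemovableAt β r) (hres : resRem p β r = j) (hα : α = removeAt β r) :
    (∀ s : ℕ, NormalAt p β s → resRem p β s = i → NormalAt p α s ∧ resRem p α s = i) ∧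
    (∀ s : ℕ, ConormalAt p α s → resAdd p α s = i → ConormalAt p β s ∧ resAdd p β s = i) :=
  statement_11_general p β α j i hij r hres hα

end IrrTensor
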